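/- arXiv:2401.07827 — 2 statements merged into one kernel-verified Lean document; each statement's English description precedes it below -/
import Mathlib

section
/- For p = 2 the sequence |L_2|_{≤n}/|M|_{≤n} has limit 4/5 along even n and limit 1/5 along odd n; in particular the density δ(L_2 : M) does not exist. -/
open Filter

def FreeMagma.len {α : Type*} : FreeMagma α → ℕ
  | FreeMagma.of _ => 1
  | FreeMagma.mul x y => x.len + y.len

noncomputable def cnt {α : Type*} (X : Set (FreeMagma α)) (n : ℕ) : ℕ :=
  Nat.card {x : FreeMagma α // x ∈ X ∧ x.len = n}

noncomputable def cntLe {α : Type*} (X : Set (FreeMagma α)) (n : ℕ) : ℕ :=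
  Nat.card {x : FreeMagma α // x ∈ X ∧ x.len ≤ n}

/-!
An element of `FreeMagma Unit` of length `n + 1` is a binary tree with `n` internal nodes, so
there are `catalan n` of them. Hence `|M|_{≤N} = ∑_{j<N} C_j`, while `|L₂|_{≤2k}` and
`|L₂|_{≤2k+1}` both equal `∑_{i<k} C_{2i+1}`. Since `C_n / C_{n+1} → 1/4`, these sums are
dominated by their last terms like geometric series: `∑_{j≤n} C_j ~ (4/3) C_n` and
`∑_{i≤m} C_{2i+1} ~ (16/15) C_{2m+1}`. The two ratios therefore tend to
`(16/15) / (4/3) = 4/5` and `(16/15) (1/4) / (4/3) = 1/5`.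
-/

open Topology

namespace FreeMagma

variable {α : Type*}

theorem one_le_len : ∀ x : FreeMagma α, 1 ≤ x.len
  | of _ => le_rfl
  | mul x _ => (one_le_len x).trans (Nat.le_add_right _ _)

theorem finite_setOf_len_le [Finite α] (n : ℕ) : {x : FreeMagma α | x.len ≤ n}.Finite := by
  induction n with
  | zero =>
    refine Set.finite_empty.subset fun x (hx : x.len ≤ 0) => ?_
    have := one_le_len x
    omega
  | succ n ih =>
    refine ((Set.finite_range of).union (ih.image2 (· * ·) ih)).subset ?_
    rintro (a | ⟨x, y⟩) h
    · exact .inl ⟨a, rfl⟩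
    · have := one_le_len x
      have := one_le_len y
      simp only [Set.mem_ofPred_eq, len] at h
      exact .inr ⟨x, (by omega : x.len ≤ n), y, (by omega : y.len ≤ n), rfl⟩

def toBinaryTree : FreeMagma Unit → BinaryTree Unit
  | of _ => .nil
  | mul x y => .node () x.toBinaryTree y.toBinaryTree

def ofBinaryTree : BinaryTree Unit → FreeMagma Unit
  | .nil => of ()
  | .node _ l r => mul (ofBinaryTree l) (ofBinaryTree r)

def equivBinaryTree : FreeMagma Unit ≃ BinaryTree Unit where
  toFun := toBinaryTree
  invFun := ofBinaryTree
  left_inv x := by induction x <;> simp_all [toBinaryTree, ofBinaryTree]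
  right_inv t := by induction t <;> simp_all [toBinaryTree, ofBinaryTree]

theorem len_eq_numNodes_add_one : ∀ x : FreeMagma Unit,
    x.len = (equivBinaryTree x).numNodes + 1
  | of _ => rfl
  | mul x y => by
    simp only [len, len_eq_numNodes_add_one x, len_eq_numNodes_add_one y]
    simp only [equivBinaryTree, Equiv.coe_fn_mk, toBinaryTree, BinaryTree.numNodes]
    omega

end FreeMagma

open FreeMagma

section

variable {α : Type*}

theorem cntLe_zero (X : Set (FreeMagma α)) : cntLe X 0 = 0 := by
  have : IsEmpty {x : FreeMagma α // x ∈ X ∧ x.len ≤ 0} :=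
    ⟨fun x => (one_le_len x.1).not_gt (by omega)⟩
  exact Nat.card_of_isEmpty

theorem cntLe_succ [Finite α] (X : Set (FreeMagma α)) (n : ℕ) :
    cntLe X (n + 1) = cntLe X n + cnt X (n + 1) := by
  have : Finite {x : FreeMagma α // x ∈ X ∧ x.len ≤ n} :=
    ((finite_setOf_len_le n).subset fun x hx => hx.2).to_subtype
  have : Finite {x : FreeMagma α // x ∈ X ∧ x.len = n + 1} :=
    ((finite_setOf_len_le (n + 1)).subset fun x hx => hx.2.le).to_subtype
  classical
  rw [cntLe, cntLe, cnt, ← Nat.card_sum]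
  refine Nat.card_congr ((Equiv.subtypeEquivRight fun x => ?_).trans
    (subtypeOrEquiv _ _ ?_))
  · rw [Nat.le_add_one_iff, and_or_left]
  · exact fun p hp hq x hx => absurd (hq x hx).2 (by have := (hp x hx).2; omega)

end

theorem cnt_univ_succ (n : ℕ) :
    cnt (Set.univ : Set (FreeMagma Unit)) (n + 1) = catalan n := by
  rw [cnt, ← BinaryTree.treesOfNumNodesEq_card_eq_catalan, ← Nat.card_eq_finsetCard]
  exact Nat.card_congr (equivBinaryTree.subtypeEquiv fun x => by
    simp [len_eq_numNodes_add_one])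

/-- The paper's `L₂`. -/
abbrev evenLen : Set (FreeMagma Unit) := {x | 2 ∣ x.len}

theorem cnt_evenLen_of_odd {n : ℕ} (hn : Odd n) : cnt evenLen n = 0 := by
  have : IsEmpty {x : FreeMagma Unit // x ∈ evenLen ∧ x.len = n} :=
    ⟨fun ⟨x, hx, hlen⟩ => Nat.not_even_iff_odd.2 hn (hlen ▸ even_iff_two_dvd.2 hx)⟩
  exact Nat.card_of_isEmpty

theorem cnt_evenLen_of_even {n : ℕ} (hn : Even n) :
    cnt evenLen n = cnt (Set.univ : Set (FreeMagma Unit)) n := by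
  refine Nat.card_congr (Equiv.subtypeEquivRight fun x => ?_)
  simp only [Set.mem_ofPred_eq, Set.mem_univ, true_and, and_iff_right_iff_imp]
  rintro rfl
  exact even_iff_two_dvd.1 hn

theorem cntLe_univ (n : ℕ) :
    cntLe (Set.univ : Set (FreeMagma Unit)) n = ∑ j ∈ Finset.range n, catalan j := by
  induction n with
  | zero => exact cntLe_zero _
  | succ n ih => rw [cntLe_succ, ih, cnt_univ_succ, Finset.sum_range_succ]

theorem cntLe_evenLen_two_mul (k : ℕ) :
    cntLe evenLen (2 * k) = ∑ i ∈ Finset.range k, catalan (2 * i + 1) := by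
  induction k with
  | zero => exact cntLe_zero _
  | succ k ih =>
    rw [Nat.mul_succ, cntLe_succ, cntLe_succ, ih, cnt_evenLen_of_odd (odd_two_mul_add_one k),
      cnt_evenLen_of_even ⟨k + 1, by ring⟩, cnt_univ_succ, add_zero, Finset.sum_range_succ]

theorem cntLe_evenLen_two_mul_add_one (k : ℕ) :
    cntLe evenLen (2 * k + 1) = ∑ i ∈ Finset.range k, catalan (2 * i + 1) := by
  rw [cntLe_succ, cnt_evenLen_of_odd (odd_two_mul_add_one k), cntLe_evenLen_two_mul, add_zero]

theorem catalan_pos (n : ℕ) : 0 < catalan n :=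
  pos_of_mul_pos_right (succ_mul_catalan_eq_centralBinom n ▸ n.centralBinom_pos) n.succ.zero_le

theorem succ_succ_mul_catalan_succ (n : ℕ) :
    (n + 2) * catalan (n + 1) = 2 * (2 * n + 1) * catalan n := by
  refine Nat.eq_of_mul_eq_mul_left n.succ_pos ?_
  calc (n + 1) * ((n + 2) * catalan (n + 1))
      = (n + 1) * Nat.centralBinom (n + 1) := by rw [← succ_mul_catalan_eq_centralBinom]
    _ = 2 * (2 * n + 1) * ((n + 1) * catalan n) := by
      rw [Nat.succ_mul_centralBinom_succ, succ_mul_catalan_eq_centralBinom]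
    _ = (n + 1) * (2 * (2 * n + 1) * catalan n) := by ring

-- `2 C_n ≤ C_{n+1}` holds only from `n = 1` on (`C_0 = C_1`); the factor `2` absorbs this.
theorem two_pow_mul_catalan_le (n k : ℕ) : 2 ^ k * catalan n ≤ 2 * catalan (n + k) := by
  induction k with
  | zero => simp only [pow_zero, one_mul, add_zero]; omega
  | succ k ih =>
    have hrec := succ_succ_mul_catalan_succ (n + k)
    rcases Nat.eq_zero_or_pos (n + k) with h | h
    · obtain ⟨rfl, rfl⟩ : n = 0 ∧ k = 0 := by omega
      simp [catalan_one]
    · have : 2 * catalan (n + k) ≤ catalan (n + k + 1) := by nlinarith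
      rw [pow_succ, ← add_assoc]
      nlinarith

theorem catalan_le_two_mul_half_pow_mul (n k : ℕ) :
    (catalan n : ℝ) ≤ 2 * (1 / 2) ^ k * catalan (n + k) := by
  have h : (2 : ℝ) ^ k * catalan n ≤ 2 * catalan (n + k) := by
    exact_mod_cast two_pow_mul_catalan_le n k
  calc (catalan n : ℝ) = (1 / 2) ^ k * (2 ^ k * catalan n) := by
        rw [← mul_assoc, ← mul_pow]; norm_num
    _ ≤ (1 / 2) ^ k * (2 * catalan (n + k)) := by gcongr
    _ = 2 * (1 / 2) ^ k * catalan (n + k) := by ring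

theorem tendsto_catalan_div_catalan_succ :
    Tendsto (fun n => (catalan n : ℝ) / catalan (n + 1)) atTop (𝓝 (1 / 4)) := by
  have hratio : ∀ n : ℕ, (catalan n : ℝ) / catalan (n + 1) = (2 + 1 * n) / (2 + 4 * n) := by
    intro n
    have := congrArg (Nat.cast (R := ℝ)) (succ_succ_mul_catalan_succ n)
    push_cast at this
    have := (Nat.cast_pos (α := ℝ)).2 (catalan_pos (n + 1))
    rw [div_eq_div_iff (by positivity) (by positivity)]
    linarith
  simpa only [hratio] using tendsto_add_mul_div_add_mul_atTop_nhds (2 : ℝ) 2 1 four_ne_zero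

theorem tendsto_div_add_of_tendsto_div_succ {K : Type*} [Field K] [TopologicalSpace K]
    [ContinuousMul K] {a : ℕ → K} {ρ : K} (ha : ∀ n, a n ≠ 0)
    (h : Tendsto (fun n => a n / a (n + 1)) atTop (𝓝 ρ)) (k : ℕ) :
    Tendsto (fun n => a n / a (n + k)) atTop (𝓝 (ρ ^ k)) := by
  induction k with
  | zero => simpa [div_self (ha _)] using tendsto_const_nhds
  | succ k ih =>
    rw [pow_succ]
    exact (ih.mul (h.comp (tendsto_add_atTop_nat k))).congr fun n =>
      div_mul_div_cancel₀ (ha (n + k))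

/-- Dominated convergence for `∑ₖ a (n - k) / a n`, whose `k`-th term tends to `ρ ^ k`. -/
theorem tendsto_sum_range_succ_div {a : ℕ → ℝ} {ρ r C : ℝ} (ha : ∀ n, 0 < a n)
    (hr : |r| < 1) (hdom : ∀ n k, a n ≤ C * r ^ k * a (n + k))
    (hρ : Tendsto (fun n => a n / a (n + 1)) atTop (𝓝 ρ)) :
    Tendsto (fun n => (∑ i ∈ Finset.range (n + 1), a i) / a n) atTop (𝓝 (1 - ρ)⁻¹) := by
  set f : ℕ → ℕ → ℝ := fun n k => if k ≤ n then a (n - k) / a n else 0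
  have hsum : ∀ n, ∑' k, f n k = (∑ i ∈ Finset.range (n + 1), a i) / a n := by
    intro n
    rw [tsum_eq_sum (s := Finset.range (n + 1)) fun k hk => if_neg (by simpa using hk),
      ← Finset.sum_range_reflect, Finset.sum_div]
    refine Finset.sum_congr rfl fun k hk => ?_
    rw [Finset.mem_range] at hk
    rw [if_pos (by omega : n + 1 - 1 - k ≤ n)]
    congr 2
    omega
  have hlim : ∀ k, Tendsto (f · k) atTop (𝓝 (ρ ^ k)) := by
    intro k
    refine ((tendsto_div_add_of_tendsto_div_succ (fun n => (ha n).ne') hρ k).comp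
      (tendsto_sub_atTop_nat k)).congr' ?_
    filter_upwards [eventually_ge_atTop k] with n hn
    simp [f, hn, Nat.sub_add_cancel hn]
  have hbound : ∀ n k, ‖f n k‖ ≤ C * r ^ k := by
    intro n k
    by_cases hk : k ≤ n
    · have := hdom (n - k) k
      rw [Nat.sub_add_cancel hk] at this
      simp only [f, if_pos hk, Real.norm_eq_abs, abs_div, abs_of_pos (ha _)]
      rwa [div_le_iff₀ (ha n)]
    · have := (ha 0).trans_le (hdom 0 k)
      simp only [f, if_neg hk, norm_zero]
      exact (pos_of_mul_pos_left this (ha _).le).le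
  have hsumm : Summable fun k => C * r ^ k := (summable_geometric_of_abs_lt_one hr).mul_left C
  have hρ1 : ‖ρ‖ < 1 := summable_geometric_iff_norm_lt_one.1 <| hsumm.of_norm_bounded fun k =>
    le_of_tendsto (hlim k).norm (.of_forall fun n => hbound n k)
  rw [← tsum_geometric_of_norm_lt_one hρ1]
  exact (tendsto_tsum_of_dominated_convergence hsumm hlim (.of_forall hbound)).congr hsum

theorem tendsto_two_mul_add_one_atTop : Tendsto (fun n : ℕ => 2 * n + 1) atTop atTop :=
  tendsto_atTop_mono (fun n => (by omega : n ≤ 2 * n + 1)) tendsto_id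

theorem tendsto_sum_catalan_div :
    Tendsto (fun n => (∑ i ∈ Finset.range (n + 1), (catalan i : ℝ)) / catalan n) atTop
      (𝓝 (4 / 3)) := by
  convert tendsto_sum_range_succ_div (fun n => by exact_mod_cast catalan_pos n)
    (by norm_num) catalan_le_two_mul_half_pow_mul tendsto_catalan_div_catalan_succ using 2
  norm_num

theorem tendsto_sum_catalan_odd_div :
    Tendsto (fun n => (∑ i ∈ Finset.range (n + 1), (catalan (2 * i + 1) : ℝ)) /
      catalan (2 * n + 1)) atTop (𝓝 (16 / 15)) := by
  have hdom (n k : ℕ) :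
      (catalan (2 * n + 1) : ℝ) ≤ 2 * (1 / 4) ^ k * catalan (2 * (n + k) + 1) := by
    have := catalan_le_two_mul_half_pow_mul (2 * n + 1) (2 * k)
    rwa [pow_mul, show 2 * n + 1 + 2 * k = 2 * (n + k) + 1 by ring,
      show ((1 : ℝ) / 2) ^ 2 = 1 / 4 by norm_num] at this
  have hratio := (tendsto_div_add_of_tendsto_div_succ
    (fun n => by exact_mod_cast (catalan_pos n).ne') tendsto_catalan_div_catalan_succ 2).comp
    tendsto_two_mul_add_one_atTop
  convert tendsto_sum_range_succ_div (fun n => by exact_mod_cast catalan_pos (2 * n + 1))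
    (by norm_num) hdom hratio using 2
  norm_num

theorem tendsto_density_evenLen_two_mul :
    Tendsto (fun k => (cntLe evenLen (2 * k) : ℝ) /
      (cntLe (Set.univ : Set (FreeMagma Unit)) (2 * k))) atTop (𝓝 (4 / 5)) := by
  rw [← tendsto_add_atTop_iff_nat 1, show (4 / 5 : ℝ) = 16 / 15 / (4 / 3) by norm_num]
  refine (tendsto_sum_catalan_odd_div.div (tendsto_sum_catalan_div.comp
    tendsto_two_mul_add_one_atTop) (by norm_num)).congr fun m => ?_
  have := (Nat.cast_pos (α := ℝ)).2 (catalan_pos (2 * m + 1))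
  simp only [Pi.div_apply, Function.comp_apply, cntLe_evenLen_two_mul, cntLe_univ, Nat.cast_sum]
  rw [div_div_div_cancel_right₀ this.ne', show 2 * (m + 1) = 2 * m + 1 + 1 by ring]

theorem tendsto_density_evenLen_two_mul_add_one :
    Tendsto (fun k => (cntLe evenLen (2 * k + 1) : ℝ) /
      (cntLe (Set.univ : Set (FreeMagma Unit)) (2 * k + 1))) atTop (𝓝 (1 / 5)) := by
  rw [← tendsto_add_atTop_iff_nat 1, show (1 / 5 : ℝ) = 16 / 15 * (1 / 4) / (4 / 3) by norm_num]
  refine ((tendsto_sum_catalan_odd_div.mul (tendsto_catalan_div_catalan_succ.comp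
    tendsto_two_mul_add_one_atTop)).div (tendsto_sum_catalan_div.comp
    ((tendsto_add_atTop_nat 1).comp tendsto_two_mul_add_one_atTop)) (by norm_num)).congr fun m => ?_
  have h₁ := (Nat.cast_pos (α := ℝ)).2 (catalan_pos (2 * m + 1))
  have h₂ := (Nat.cast_pos (α := ℝ)).2 (catalan_pos (2 * m + 1 + 1))
  simp only [Pi.div_apply, Function.comp_apply, cntLe_evenLen_two_mul_add_one, cntLe_univ,
    Nat.cast_sum]
  rw [div_mul_div_cancel₀ h₁.ne', div_div_div_cancel_right₀ h₂.ne',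
    show 2 * (m + 1) + 1 = 2 * m + 1 + 1 + 1 by ring]

theorem stmt_14 :
    Tendsto (fun k =>
        (cntLe {x : FreeMagma Unit | 2 ∣ x.len} (2 * k) : ℝ) /
          (cntLe (Set.univ : Set (FreeMagma Unit)) (2 * k) : ℝ))
      atTop (nhds (4 / 5)) ∧
    Tendsto (fun k =>
        (cntLe {x : FreeMagma Unit | 2 ∣ x.len} (2 * k + 1) : ℝ) /
          (cntLe (Set.univ : Set (FreeMagma Unit)) (2 * k + 1) : ℝ))
      atTop (nhds (1 / 5)) ∧
    ¬∃ d : ℝ, Tendsto (fun n =>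
        (cntLe {x : FreeMagma Unit | 2 ∣ x.len} n : ℝ) /
          (cntLe (Set.univ : Set (FreeMagma Unit)) n : ℝ))
      atTop (nhds d) := by
  refine ⟨tendsto_density_evenLen_two_mul, tendsto_density_evenLen_two_mul_add_one, ?_⟩
  rintro ⟨d, hd⟩
  have h₀ := tendsto_nhds_unique (hd.comp (tendsto_id.const_mul_atTop' two_pos))
    tendsto_density_evenLen_two_mul
  have h₁ := tendsto_nhds_unique (hd.comp tendsto_two_mul_add_one_atTop)
    tendsto_density_evenLen_two_mul_add_one
  norm_num [h₀] at h₁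
end

section
/- If G is the minimal generating set of a subgroupoid N of the free magma on one generator, then the counting sequence of N is the Catalan transform of the counting sequence of G: |N|_n = |G|_n + Σ_{i+j=n, 0<i,j<n} |N|_i · |N|_j. -/
/-!
Every element of the free magma other than a generator is uniquely a product `x * y`, with
`len (x * y) = len x + len y`. If `G` generates `N`, then `G ∪ N * N` is closed under
multiplication, so every element of `N \ G` is a product of two elements of `N`; conversely
`N \ (N * N)` already generates `N` (induct on the tree), so by minimality
`G = N \ (N * N)`. Hence an element of `N` of length `n` either lies in `G`, or factors uniquely
as `x * y` with `x, y ∈ N` of lengths `i` and `n - i`, `0 < i < n`.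
-/

open Filter

open Set Pointwise

lemma Subsemigroup.coe_mul_coe_subset {M : Type*} [Mul M] (N : Subsemigroup M) :
    (N : Set M) * N ⊆ N :=
  Set.mul_subset_iff.2 fun _ hx _ hy => mul_mem hx hy

lemma Subsemigroup.coe_subset_union_mul_of_closure_eq {M : Type*} [Mul M] {G : Set M}
    {N : Subsemigroup M} (h : Subsemigroup.closure G = N) : (N : Set M) ⊆ G ∪ N * N := by
  have hGN : G ⊆ N := h ▸ Subsemigroup.subset_closure
  have hsub : G ∪ N * N ⊆ N := union_subset hGN N.coe_mul_coe_subset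
  let T : Subsemigroup M :=
    { carrier := G ∪ N * N
      mul_mem' := fun ha hb => .inr (Set.mul_mem_mul (hsub ha) (hsub hb)) }
  have hT : Subsemigroup.closure G ≤ T := Subsemigroup.closure_le.2 subset_union_left
  rwa [h] at hT

namespace FreeMagma

variable {α : Type*}

lemma len_eq_length (x : FreeMagma α) : x.len = x.length := by
  induction x with
  | ih1 => rfl
  | ih2 x y hx hy => exact congrArg₂ (· + ·) hx hy

lemma len_pos (x : FreeMagma α) : 0 < x.len := x.len_eq_length ▸ x.length_pos

lemma len_mul (x y : FreeMagma α) : (x * y).len = x.len + y.len := rfl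

lemma mul_inj {x y x' y' : FreeMagma α} : x * y = x' * y' ↔ x = x' ∧ y = y' := by
  refine ⟨fun h => ?_, fun ⟨hx, hy⟩ => hx ▸ hy ▸ rfl⟩
  change mul x y = mul x' y' at h
  injection h with hx hy
  exact ⟨hx, hy⟩

lemma ncard_mul (s t : Set (FreeMagma α)) : (s * t).ncard = s.ncard * t.ncard := by
  rw [← image2_mul, ← image_prod,
    ncard_image_of_injective _ fun p q h => Prod.ext_iff.2 (mul_inj.1 h), ncard_prod]

lemma disjoint_mul_of_disjoint_left {s s' t t' : Set (FreeMagma α)} (h : Disjoint s s') :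
    Disjoint (s * t) (s' * t') := by
  rw [Set.disjoint_left]
  rintro _ ⟨x, hx, y, -, rfl⟩ ⟨x', hx', y', -, hxy⟩
  exact h.ne_of_mem hx hx' (mul_inj.1 hxy).1.symm

lemma inter_len_eq_union {N : Set (FreeMagma α)} (hN : N * N ⊆ N) (n : ℕ) :
    N ∩ len ⁻¹' {n} = ((N \ (N * N)) ∩ len ⁻¹' {n}) ∪
      ⋃ i ∈ Finset.Ioo 0 n, (N ∩ len ⁻¹' {i}) * (N ∩ len ⁻¹' {n - i}) := by
  ext z
  simp only [mem_inter_iff, Set.mem_sdiff, mem_union, mem_iUnion, mem_preimage, mem_singleton_iff,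
    Finset.mem_Ioo, exists_prop]
  constructor
  · rintro ⟨hzN, rfl⟩
    by_cases hz : z ∈ N * N
    · obtain ⟨x, hx, y, hy, rfl⟩ := hz
      have := y.len_pos
      exact .inr ⟨x.len, ⟨x.len_pos, by rw [len_mul]; omega⟩, x, ⟨hx, rfl⟩, y,
        ⟨hy, (Nat.add_sub_cancel_left ..).symm⟩, rfl⟩
    · exact .inl ⟨⟨hzN, hz⟩, rfl⟩
  · rintro (⟨⟨hzN, -⟩, rfl⟩ | ⟨i, ⟨-, hin⟩, x, ⟨hx, hxi⟩, y, ⟨hy, hyi⟩, rfl⟩)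
    · exact ⟨hzN, rfl⟩
    · exact ⟨hN (mul_mem_mul hx hy), by rw [len_mul, hxi, hyi]; omega⟩

lemma finite_len_preimage [Finite α] (n : ℕ) : (len ⁻¹' {n} : Set (FreeMagma α)).Finite := by
  induction n using Nat.strong_induction_on with
  | _ n ih =>
  rw [← univ_inter (len ⁻¹' {n}), inter_len_eq_union (subset_univ _)]
  refine .union ((finite_range of).subset ?_) <| (Finset.Ioo 0 n).finite_toSet.biUnion
    fun i hi => ?_
  · rintro (a | ⟨x, y⟩) ⟨⟨-, hxy⟩, -⟩
    · exact ⟨a, rfl⟩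
    · exact absurd (Set.mul_mem_mul (mem_univ x) (mem_univ y)) hxy
  · rw [Finset.coe_Ioo, mem_Ioo] at hi
    exact ((ih i hi.2).subset inter_subset_right).mul
      ((ih (n - i) (by omega)).subset inter_subset_right)

lemma ncard_inter_len [Finite α] {N : Set (FreeMagma α)} (hN : N * N ⊆ N) (n : ℕ) :
    (N ∩ len ⁻¹' {n}).ncard = ((N \ (N * N)) ∩ len ⁻¹' {n}).ncard +
      ∑ i ∈ Finset.Ioo 0 n, (N ∩ len ⁻¹' {i}).ncard * (N ∩ len ⁻¹' {n - i}).ncard := by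
  have hfin (X : Set (FreeMagma α)) (i : ℕ) : (X ∩ len ⁻¹' {i}).Finite :=
    (finite_len_preimage i).subset inter_subset_right
  have hprod_fin (i : ℕ) : ((N ∩ len ⁻¹' {i}) * (N ∩ len ⁻¹' {n - i})).Finite :=
    (hfin N i).mul (hfin N (n - i))
  have hdisj_prod : (Finset.Ioo 0 n : Set ℕ).PairwiseDisjoint
      fun i => (N ∩ len ⁻¹' {i}) * (N ∩ len ⁻¹' {n - i}) := by
    intro i _ j _ hij
    refine disjoint_mul_of_disjoint_left (Set.disjoint_left.2 ?_)
    rintro x ⟨-, rfl⟩ ⟨-, hj⟩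
    exact hij hj
  have hdisj_gen : Disjoint ((N \ (N * N)) ∩ len ⁻¹' {n})
      (⋃ i ∈ Finset.Ioo 0 n, (N ∩ len ⁻¹' {i}) * (N ∩ len ⁻¹' {n - i})) := by
    rw [Set.disjoint_left]
    rintro _ ⟨⟨-, hz⟩, -⟩ hmem
    refine hz ?_
    obtain ⟨i, -, hi⟩ := mem_iUnion₂.1 hmem
    exact Set.mul_subset_mul inter_subset_left inter_subset_left hi
  rw [inter_len_eq_union hN, ncard_union_eq hdisj_gen (hfin _ n)
    ((Finset.Ioo 0 n).finite_toSet.biUnion fun i _ => hprod_fin i), ← finsum_mem_coe_finset]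
  simp only [← ncard_mul]
  exact congrArg _
    ((Finset.Ioo 0 n).finite_toSet.ncard_biUnion (fun i _ => hprod_fin i) hdisj_prod)

lemma closure_sdiff_mul (N : Subsemigroup (FreeMagma α)) :
    Subsemigroup.closure ((N : Set (FreeMagma α)) \ (N * N)) = N := by
  refine le_antisymm (Subsemigroup.closure_le.2 sdiff_subset) fun z hz => ?_
  induction z with
  | ih1 a => exact Subsemigroup.subset_closure ⟨hz, fun ⟨x, _, y, _, h⟩ => nomatch h⟩
  | ih2 x y ihx ihy =>
    by_cases hxy : x * y ∈ (N : Set (FreeMagma α)) * N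
    · obtain ⟨x', hx', y', hy', h⟩ := hxy
      obtain ⟨rfl, rfl⟩ := mul_inj.1 h
      exact mul_mem (ihx hx') (ihy hy')
    · exact Subsemigroup.subset_closure ⟨hz, hxy⟩

lemma eq_sdiff_mul_of_minimal {N : Subsemigroup (FreeMagma α)} {G : Set (FreeMagma α)}
    (hgen : Subsemigroup.closure G = N)
    (hmin : ∀ G' : Set (FreeMagma α), Subsemigroup.closure G' = N → G ⊆ G') :
    G = (N : Set (FreeMagma α)) \ (N * N) := by
  refine (hmin _ (closure_sdiff_mul N)).antisymm fun z ⟨hzN, hz⟩ => ?_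
  exact (Subsemigroup.coe_subset_union_mul_of_closure_eq hgen hzN).resolve_right hz

end FreeMagma

lemma cnt_eq_ncard {α : Type*} (X : Set (FreeMagma α)) (n : ℕ) :
    cnt X n = (X ∩ FreeMagma.len ⁻¹' {n}).ncard :=
  Nat.card_coe_set_eq _

theorem stmt_18_general (N : Subsemigroup (FreeMagma Unit))
    (G : Set (FreeMagma Unit)) (hgen : Subsemigroup.closure G = N)
    (hmin : ∀ G' : Set (FreeMagma Unit), Subsemigroup.closure G' = N → G ⊆ G')
    (n : ℕ) :
    cnt (N : Set (FreeMagma Unit)) n =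
      cnt G n + ∑ i ∈ Finset.Ioo 0 n,
        cnt (N : Set (FreeMagma Unit)) i * cnt (N : Set (FreeMagma Unit)) (n - i) := by
  obtain rfl := FreeMagma.eq_sdiff_mul_of_minimal hgen hmin
  simp only [cnt_eq_ncard]
  exact FreeMagma.ncard_inter_len N.coe_mul_coe_subset n

theorem stmt_18 (N : Subsemigroup (FreeMagma Unit))
    (G : Set (FreeMagma Unit)) (hgen : Subsemigroup.closure G = N)
    (hmin : ∀ G' : Set (FreeMagma Unit), Subsemigroup.closure G' = N → G ⊆ G')
    (n : ℕ) (hn : 1 ≤ n) :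
    cnt (N : Set (FreeMagma Unit)) n =
      cnt G n + ∑ i ∈ Finset.Ioo 0 n,
        cnt (N : Set (FreeMagma Unit)) i * cnt (N : Set (FreeMagma Unit)) (n - i) :=
  stmt_18_general N G hgen hmin n
end
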